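/- Let ℓ : {0,1} × [0,1] → ℝ be a proper loss bounded by B > 0, let ε > 0, and let N be an integer with N ≥ 3B/ε. Suppose ℓ satisfies: for all y ∈ {0,1}, all j ∈ {0,…,N−1}, and all p ∈ [j/N, (j+1)/N): |ℓ(y, p) − ℓ(y, j/N)| ≤ B/N. Let y_1,…,y_T ∈ {0,1} be outcomes, let p^F_1,…,p^F_T ∈ [0,1) be raw forecasts, and partition {1,…,T} into groups S_j = {t : p^F_t ∈ [j/N, (j+1)/N)} for j = 0,…,N−1. Let p_1,…,p_T be recalibrated forecasts taking values in the grid G_N = {i/N : i = 0,…,N}, and suppose for each nonempty S_j the ℓ1 calibration error of {(p_t, y_t) : t ∈ S_j} is at most ε/(3B). Then: (a) the ℓ1 calibration error of the full sequence (p_t, y_t)_{t=1}^T is at most ε/(3B), and (b) (1/T) Σ_{t=1}^T ℓ(y_t, p_t) − (1/T) Σ_{t=1}^T ℓ(y_t, p^F_t) ≤ ε. -/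

import Mathlib

open scoped BigOperators Classical

/-- The ℓ1 calibration error over a set `S` of times, normalized by `|S|`:
`(1/|S|) · ∑_{i=0}^N |∑_{t ∈ S : p_t = i/N} (y_t − i/N)|`. -/
noncomputable def calErrL1On (T N : ℕ) (p y : Fin T → ℝ) (S : Finset (Fin T)) : ℝ :=
  (1 / (S.card : ℝ)) * ∑ i ∈ Finset.range (N + 1),
    |∑ t ∈ S.filter (fun t => p t = (i : ℝ) / N), (y t - (i : ℝ) / N)|

/-- The bucket `S_j = {t : p^F_t ∈ [j/N, (j+1)/N)}` of times whose raw forecast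
falls in the `j`-th grid interval. -/
noncomputable def bucket (T N : ℕ) (pF : Fin T → ℝ) (j : ℕ) : Finset (Fin T) :=
  Finset.univ.filter (fun t => pF t ∈ Set.Ico ((j : ℝ) / N) (((j : ℝ) + 1) / N))

/-!
Split the times by the bucket of the raw forecast and, inside a bucket, by the value of the
recalibrated forecast. On a cell where the recalibrated forecast is the constant `v`, properness
compares the loss of `v` with that of the left end `j/N` of the bucket, up to `2B` times the
cell's calibration gap `|∑ (y_t - v)|`; summing, the recalibrated forecasts lose at most
`2B · (ε/3B) = 2ε/3` per time more than the constant `j/N`, which by the regularity of `ℓ` on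
the grid interval loses at most `B/N ≤ ε/3` more than the raw forecast. Calibration of the whole
sequence follows from the per-bucket calibration by the triangle inequality.
-/

open Finset

noncomputable def calErrL1Sum {ι : Type*} (N : ℕ) (p y : ι → ℝ) (s : Finset ι) : ℝ :=
  ∑ i ∈ range (N + 1), |∑ t ∈ s with p t = (i : ℝ) / N, (y t - (i : ℝ) / N)|

def IsProperLoss (ℓ : ℝ → ℝ → ℝ) : Prop :=
  ∀ p ∈ Set.Icc (0:ℝ) 1, ∀ q ∈ Set.Icc (0:ℝ) 1,
    p * ℓ 1 p + (1 - p) * ℓ 0 p ≤ p * ℓ 1 q + (1 - p) * ℓ 0 q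

def IsBoundedLoss (ℓ : ℝ → ℝ → ℝ) (B : ℝ) : Prop :=
  ∀ y ∈ ({0, 1} : Set ℝ), ∀ q ∈ Set.Icc (0:ℝ) 1, 0 ≤ ℓ y q ∧ ℓ y q ≤ B

lemma natCast_div_mem_Icc {i N : ℕ} (h : i ≤ N) : (i : ℝ) / N ∈ Set.Icc (0:ℝ) 1 :=
  ⟨by positivity, div_le_one_of_le₀ (by exact_mod_cast h) (Nat.cast_nonneg N)⟩

lemma sum_range_fiberwise_grid {ι M : Type*} [AddCommMonoid M] {N : ℕ} {s : Finset ι}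
    {p : ι → ℝ} (hp : ∀ t ∈ s, ∃ i ∈ range (N + 1), p t = (i : ℝ) / N) (f : ι → M) :
    ∑ i ∈ range (N + 1), ∑ t ∈ s with p t = (i : ℝ) / N, f t = ∑ t ∈ s, f t := by
  have hinj : Set.InjOn (fun i : ℕ => (i : ℝ) / N) (range (N + 1)) := by
    rcases N.eq_zero_or_pos with rfl | hN
    · intro i hi j hj _
      simp_all
    · intro i _ j _ h
      simpa [div_left_inj' (by positivity : (N : ℝ) ≠ 0)] using h
  calc ∑ i ∈ range (N + 1), ∑ t ∈ s with p t = (i : ℝ) / N, f t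
      = ∑ x ∈ (range (N + 1)).image (fun i : ℕ => (i : ℝ) / N), ∑ t ∈ s with p t = x, f t :=
        (sum_image (f := fun x => ∑ t ∈ s with p t = x, f t) hinj).symm
    _ = ∑ t ∈ s, f t := sum_fiberwise_of_maps_to (fun t ht => by
        obtain ⟨i, hi, h⟩ := hp t ht
        exact mem_image.2 ⟨i, hi, h.symm⟩) f

lemma calErrL1Sum_le_sum_fiberwise {ι κ : Type*} [DecidableEq κ] (N : ℕ) (p y : ι → ℝ)
    {s : Finset ι} {J : Finset κ} {g : ι → κ} (hg : ∀ t ∈ s, g t ∈ J) :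
    calErrL1Sum N p y s ≤ ∑ j ∈ J, calErrL1Sum N p y (s.filter (g · = j)) := by
  unfold calErrL1Sum
  rw [sum_comm]
  refine sum_le_sum fun i _ => ?_
  rw [← sum_fiberwise_of_maps_to (fun t ht => hg t (mem_filter.1 ht).1)]
  refine (abs_sum_le_sum_abs _ _).trans_eq (sum_congr rfl fun j _ => ?_)
  rw [filter_comm]

lemma calErrL1On_eq_div (T N : ℕ) (p y : Fin T → ℝ) (S : Finset (Fin T)) :
    calErrL1On T N p y S = calErrL1Sum N p y S / S.card :=
  one_div_mul_eq_div _ _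

lemma calErrL1Sum_le_card_mul {T N : ℕ} {p y : Fin T → ℝ} {S : Finset (Fin T)} {c : ℝ}
    (h : S.Nonempty → calErrL1On T N p y S ≤ c) : calErrL1Sum N p y S ≤ S.card * c := by
  rcases S.eq_empty_or_nonempty with rfl | hS
  · simp [calErrL1Sum]
  · have := h hS
    rwa [calErrL1On_eq_div, div_le_iff₀ (by exact_mod_cast hS.card_pos), mul_comm] at this

lemma IsBoundedLoss.abs_sub_le {ℓ : ℝ → ℝ → ℝ} {B q : ℝ} (h : IsBoundedLoss ℓ B)
    (hq : q ∈ Set.Icc (0:ℝ) 1) : |ℓ 1 q - ℓ 0 q| ≤ B :=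
  abs_sub_le_of_nonneg_of_le (h 1 (by simp) q hq).1 (h 1 (by simp) q hq).2
    (h 0 (by simp) q hq).1 (h 0 (by simp) q hq).2

lemma sum_binary_loss_eq {ι : Type*} {s : Finset ι} {y : ι → ℝ}
    (hy : ∀ t ∈ s, y t = 0 ∨ y t = 1) (ℓ : ℝ → ℝ → ℝ) (v x : ℝ) :
    ∑ t ∈ s, ℓ (y t) x =
      s.card * (v * ℓ 1 x + (1 - v) * ℓ 0 x) + (∑ t ∈ s, (y t - v)) * (ℓ 1 x - ℓ 0 x) := by
  rw [card_eq_sum_ones, Nat.cast_sum, sum_mul, sum_mul, ← sum_add_distrib]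
  refine sum_congr rfl fun t ht => ?_
  rcases hy t ht with h | h <;> rw [h] <;> push_cast <;> ring

lemma IsProperLoss.sum_le {ℓ : ℝ → ℝ → ℝ} {B v q : ℝ} (hℓ : IsProperLoss ℓ)
    (hB : IsBoundedLoss ℓ B) {ι : Type*} {s : Finset ι} {y : ι → ℝ}
    (hy : ∀ t ∈ s, y t = 0 ∨ y t = 1) (hv : v ∈ Set.Icc (0:ℝ) 1) (hq : q ∈ Set.Icc (0:ℝ) 1) :
    ∑ t ∈ s, ℓ (y t) v ≤ ∑ t ∈ s, ℓ (y t) q + 2 * B * |∑ t ∈ s, (y t - v)| := by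
  set d := ∑ t ∈ s, (y t - v)
  have hgap : ∀ x ∈ Set.Icc (0:ℝ) 1, |d * (ℓ 1 x - ℓ 0 x)| ≤ |d| * B := fun x hx => by
    rw [abs_mul]
    exact mul_le_mul_of_nonneg_left (hB.abs_sub_le hx) (abs_nonneg d)
  have hexp := mul_le_mul_of_nonneg_left (hℓ v hv q hq) (Nat.cast_nonneg s.card)
  rw [sum_binary_loss_eq hy ℓ v v, sum_binary_loss_eq hy ℓ v q]
  linarith [le_abs_self (d * (ℓ 1 v - ℓ 0 v)), neg_abs_le (d * (ℓ 1 q - ℓ 0 q)),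
    hgap v hv, hgap q hq]

lemma IsProperLoss.sum_le_add_calErrL1Sum {ℓ : ℝ → ℝ → ℝ} {B q : ℝ} (hℓ : IsProperLoss ℓ)
    (hB : IsBoundedLoss ℓ B) {ι : Type*} {N : ℕ} {s : Finset ι} {p y : ι → ℝ}
    (hy : ∀ t ∈ s, y t = 0 ∨ y t = 1) (hp : ∀ t ∈ s, ∃ i ∈ range (N + 1), p t = (i : ℝ) / N)
    (hq : q ∈ Set.Icc (0:ℝ) 1) :
    ∑ t ∈ s, ℓ (y t) (p t) ≤ ∑ t ∈ s, ℓ (y t) q + 2 * B * calErrL1Sum N p y s := by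
  rw [← sum_range_fiberwise_grid hp fun t => ℓ (y t) (p t),
    ← sum_range_fiberwise_grid hp fun t => ℓ (y t) q, calErrL1Sum, mul_sum, ← sum_add_distrib]
  refine sum_le_sum fun i hi => ?_
  rw [sum_congr rfl fun t ht => by rw [(mem_filter.1 ht).2]]
  exact hℓ.sum_le hB (fun t ht => hy t (mem_filter.1 ht).1)
    (natCast_div_mem_Icc (Nat.lt_succ_iff.1 (mem_range.1 hi))) hq

section Buckets

variable {T N : ℕ} {pF : Fin T → ℝ}

lemma floor_mul_mem_range (hN : 0 < N) {x : ℝ} (hx : x ∈ Set.Ico (0:ℝ) 1) :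
    ⌊(N : ℝ) * x⌋₊ ∈ range N := by
  rw [mem_range, Nat.floor_lt (mul_nonneg (Nat.cast_nonneg N) hx.1)]
  exact mul_lt_of_lt_one_right (by exact_mod_cast hN) hx.2

lemma bucket_eq_filter_floor (hN : 0 < N) (hpF : ∀ t, 0 ≤ pF t) (j : ℕ) :
    bucket T N pF j = univ.filter (fun t => ⌊(N : ℝ) * pF t⌋₊ = j) := by
  have hN' : (0 : ℝ) < N := by exact_mod_cast hN
  ext t
  simp only [bucket, mem_filter, mem_univ, true_and, Set.mem_Ico]
  rw [Nat.floor_eq_iff (mul_nonneg hN'.le (hpF t)), div_le_iff₀ hN', lt_div_iff₀ hN',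
    mul_comm (pF t)]

lemma sum_bucket_eq_sum {M : Type*} [AddCommMonoid M] (hN : 0 < N)
    (hpF : ∀ t, pF t ∈ Set.Ico (0:ℝ) 1) (f : Fin T → M) :
    ∑ j ∈ range N, ∑ t ∈ bucket T N pF j, f t = ∑ t, f t := by
  simp_rw [bucket_eq_filter_floor hN fun t => (hpF t).1]
  exact sum_fiberwise_of_maps_to (fun t _ => floor_mul_mem_range hN (hpF t)) f

lemma sum_card_bucket (hN : 0 < N) (hpF : ∀ t, pF t ∈ Set.Ico (0:ℝ) 1) :
    ∑ j ∈ range N, ((bucket T N pF j).card : ℝ) = T := by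
  simpa using sum_bucket_eq_sum hN hpF fun _ => (1 : ℝ)

variable {p y : Fin T → ℝ}

lemma calErrL1On_univ_le_of_bucket (hN : 0 < N) (hpF : ∀ t, pF t ∈ Set.Ico (0:ℝ) 1) {c : ℝ}
    (hc : 0 ≤ c) (hcal : ∀ j ∈ range N, (bucket T N pF j).Nonempty →
      calErrL1On T N p y (bucket T N pF j) ≤ c) :
    calErrL1On T N p y univ ≤ c := by
  rw [calErrL1On_eq_div]
  refine div_le_of_le_mul₀ (Nat.cast_nonneg _) hc ?_
  calc calErrL1Sum N p y univ
      ≤ ∑ j ∈ range N, calErrL1Sum N p y (bucket T N pF j) := by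
        simp_rw [bucket_eq_filter_floor hN fun t => (hpF t).1]
        exact calErrL1Sum_le_sum_fiberwise N p y fun t _ => floor_mul_mem_range hN (hpF t)
    _ ≤ ∑ j ∈ range N, (bucket T N pF j).card * c :=
        sum_le_sum fun j hj => calErrL1Sum_le_card_mul (hcal j hj)
    _ = c * (univ : Finset (Fin T)).card := by
        rw [← sum_mul, sum_card_bucket hN hpF, card_univ, Fintype.card_fin, mul_comm]

lemma sum_loss_bucket_le {ℓ : ℝ → ℝ → ℝ} {B : ℝ} (hℓ : IsProperLoss ℓ) (hbd : IsBoundedLoss ℓ B)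
    (hy : ∀ t, y t = 0 ∨ y t = 1) (hp : ∀ t, ∃ i ∈ range (N + 1), p t = (i : ℝ) / N)
    {j : ℕ} (hj : j ≤ N) (hlip : ∀ y' ∈ ({0, 1} : Set ℝ),
      ∀ q ∈ Set.Ico ((j : ℝ) / N) (((j : ℝ) + 1) / N), |ℓ y' q - ℓ y' ((j : ℝ) / N)| ≤ B / N) :
    ∑ t ∈ bucket T N pF j, ℓ (y t) (p t) ≤ ∑ t ∈ bucket T N pF j, ℓ (y t) (pF t) +
      (bucket T N pF j).card * (B / N) + 2 * B * calErrL1Sum N p y (bucket T N pF j) := by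
  have hmesh : ∑ t ∈ bucket T N pF j, ℓ (y t) ((j : ℝ) / N)
      ≤ ∑ t ∈ bucket T N pF j, ℓ (y t) (pF t) + (bucket T N pF j).card * (B / N) := by
    rw [← nsmul_eq_mul, ← sum_const, ← sum_add_distrib]
    refine sum_le_sum fun t ht => ?_
    have := hlip (y t) (hy t) (pF t) (mem_filter.1 ht).2
    linarith [(abs_le.1 this).1]
  linarith [hℓ.sum_le_add_calErrL1Sum (s := bucket T N pF j) hbd (fun t _ => hy t)
    (fun t _ => hp t) (natCast_div_mem_Icc hj)]

lemma avg_loss_sub_avg_loss_le {ℓ : ℝ → ℝ → ℝ} {B ε : ℝ} (hℓ : IsProperLoss ℓ)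
    (hbd : IsBoundedLoss ℓ B) (hB : 0 < B) (hε : 0 ≤ ε) (hN : 0 < N) (hBN : B / N ≤ ε / 3)
    (hy : ∀ t, y t = 0 ∨ y t = 1) (hpF : ∀ t, pF t ∈ Set.Ico (0:ℝ) 1)
    (hp : ∀ t, ∃ i ∈ range (N + 1), p t = (i : ℝ) / N)
    (hlip : ∀ y' ∈ ({0, 1} : Set ℝ), ∀ j ∈ range N,
      ∀ q ∈ Set.Ico ((j : ℝ) / N) (((j : ℝ) + 1) / N), |ℓ y' q - ℓ y' ((j : ℝ) / N)| ≤ B / N)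
    (hcal : ∀ j ∈ range N, (bucket T N pF j).Nonempty →
      calErrL1On T N p y (bucket T N pF j) ≤ ε / (3 * B)) :
    (1 / (T : ℝ)) * ∑ t, ℓ (y t) (p t) - (1 / (T : ℝ)) * ∑ t, ℓ (y t) (pF t) ≤ ε := by
  have hbucket : ∀ j ∈ range N, ∑ t ∈ bucket T N pF j, ℓ (y t) (p t)
      ≤ ∑ t ∈ bucket T N pF j, ℓ (y t) (pF t) + (bucket T N pF j).card * ε := by
    intro j hj
    set n : ℝ := ((bucket T N pF j).card : ℝ)
    have hloss := sum_loss_bucket_le (pF := pF) hℓ hbd hy hp (mem_range.1 hj).le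
      fun y' hy' => hlip y' hy' j hj
    have hcal' := mul_le_mul_of_nonneg_left (calErrL1Sum_le_card_mul (hcal j hj))
      (by positivity : (0 : ℝ) ≤ 2 * B)
    have hmesh := mul_le_mul_of_nonneg_left hBN (Nat.cast_nonneg (bucket T N pF j).card)
    have hsplit : 2 * B * (n * (ε / (3 * B))) = n * (2 * ε / 3) := by
      field_simp
    linarith
  rw [← mul_sub, one_div_mul_eq_div]
  refine div_le_of_le_mul₀ (Nat.cast_nonneg _) hε ?_
  rw [← sum_bucket_eq_sum hN hpF, ← sum_bucket_eq_sum hN hpF, ← sum_sub_distrib,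
    ← sum_card_bucket hN hpF, mul_sum]
  exact sum_le_sum fun j hj => by linarith [hbucket j hj]

end Buckets

/-- Theorem 1, main result: if `ℓ` is a proper loss bounded by `B > 0`
varying by at most `B/N` on each grid interval, `N ≥ 3B/ε`, and on each nonempty bucket
`S_j = {t : p^F_t ∈ [j/N,(j+1)/N)}` the recalibrated grid-valued forecasts have ℓ1
calibration error at most `ε/(3B)`, then (a) the full sequence of recalibrated forecasts
has ℓ1 calibration error at most `ε/(3B)`, and (b) the average-loss regret of the
recalibrated forecasts relative to the raw forecasts is at most `ε`. -/
theorem stmt7 (T N : ℕ) (ε B : ℝ) (hB : 0 < B) (hε : 0 < ε)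
    (hN : 3 * B / ε ≤ (N : ℝ)) (y : Fin T → ℝ)
    (hy : ∀ t, y t = 0 ∨ y t = 1)
    (pF : Fin T → ℝ) (hpF : ∀ t, pF t ∈ Set.Ico (0:ℝ) 1)
    (p : Fin T → ℝ) (hp : ∀ t, ∃ i ∈ Finset.range (N + 1), p t = (i : ℝ) / N)
    (ℓ : ℝ → ℝ → ℝ)
    (hproper : ∀ p' ∈ Set.Icc (0:ℝ) 1, ∀ q ∈ Set.Icc (0:ℝ) 1,
      p' * ℓ 1 p' + (1 - p') * ℓ 0 p' ≤ p' * ℓ 1 q + (1 - p') * ℓ 0 q)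
    (hbound : ∀ y' ∈ ({0, 1} : Set ℝ), ∀ q ∈ Set.Icc (0:ℝ) 1,
      0 ≤ ℓ y' q ∧ ℓ y' q ≤ B)
    (hlip : ∀ y' ∈ ({0, 1} : Set ℝ), ∀ j ∈ Finset.range N,
      ∀ q ∈ Set.Ico ((j : ℝ) / N) (((j : ℝ) + 1) / N),
        |ℓ y' q - ℓ y' ((j : ℝ) / N)| ≤ B / N)
    (hcal : ∀ j ∈ Finset.range N, (bucket T N pF j).Nonempty →
      calErrL1On T N p y (bucket T N pF j) ≤ ε / (3 * B)) :
    calErrL1On T N p y Finset.univ ≤ ε / (3 * B) ∧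
    (1 / (T : ℝ)) * ∑ t, ℓ (y t) (p t) - (1 / (T : ℝ)) * ∑ t, ℓ (y t) (pF t) ≤ ε := by
  have hNpos : 0 < N := by exact_mod_cast (by positivity : 0 < 3 * B / ε).trans_le hN
  have hBN : B / N ≤ ε / 3 := by
    rw [div_le_iff₀ hε] at hN
    rw [div_le_div_iff₀ (by exact_mod_cast hNpos) (by norm_num)]
    linarith
  exact ⟨calErrL1On_univ_le_of_bucket hNpos hpF (by positivity) hcal,
    avg_loss_sub_avg_loss_le hproper hbound hB hε.le hNpos hBN hy hpF hp hlip hcal⟩
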